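/- Let A be an associative ring with 1 and I a two-sided ideal. For y ∈ GL(n,A,I), the 2n×2n block-diagonal matrix diag(y⁻¹, y) belongs to E(2n,A,I). -/

import Mathlib

/-!
Write `a = y⁻¹ - 1` and `b = y - 1`; both have entries in `I`. The identities
`(1 + a)(1 + b) = 1 = (1 + b)(1 + a)` give the factorization into block matrices
`diag(y⁻¹, y) = [[1, a], [0, 1]] · g [[1, 0], [-b, 1]] g⁻¹ · [[1, 0], [-a, 1]]`
with `g = [[1, 1], [0, 1]]`. A block transvection whose off-diagonal block has entries in a set
`S` is a product of elementary transvections with entries in `S`, so the outer factors lie in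
`E(2n, I)` and the middle one is an `E(2n, A)`-conjugate of an element of `E(2n, I)`.
-/

open Matrix

variable (n : Type*) [DecidableEq n] [Fintype n] (A : Type*) [Ring A]

/-- The elementary matrix `e_{ij}(ξ) = 1 + ξ E_{ij}` as a unit of the matrix ring
(its inverse is `e_{ij}(-ξ)`). -/
def elemUnit {n : Type*} [DecidableEq n] [Fintype n] {A : Type*} [Ring A]
    (i j : n) (h : i ≠ j) (ξ : A) : (Matrix n n A)ˣ where
  val := 1 + Matrix.single i j ξ
  inv := 1 + Matrix.single i j (-ξ)
  val_inv := by
    have h0 : Matrix.single i j ξ * Matrix.single i j (-ξ) = 0 :=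
      Matrix.single_mul_single_of_ne (c := ξ) i j i h.symm (-ξ)
    have h1 : Matrix.single i j ξ + Matrix.single i j (-ξ) = 0 := by
      rw [← Matrix.single_add, add_neg_cancel, Matrix.single_zero]
    rw [mul_add, mul_one, add_mul, one_mul, h0, add_zero, add_assoc, h1, add_zero]
  inv_val := by
    have h0 : Matrix.single i j (-ξ) * Matrix.single i j ξ = 0 :=
      Matrix.single_mul_single_of_ne (c := -ξ) i j i h.symm ξ
    have h1 : Matrix.single i j (-ξ) + Matrix.single i j ξ = 0 := by
      rw [← Matrix.single_add, neg_add_cancel, Matrix.single_zero]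
    rw [mul_add, mul_one, add_mul, one_mul, h0, add_zero, add_assoc, h1, add_zero]

/-- The subgroup `E(n,S)` of `GL(n,A)` generated by the elementary matrices
`e_{ij}(ξ)` with `ξ ∈ S`, `i ≠ j`. -/
def elemSubgroup (S : Set A) : Subgroup (Matrix n n A)ˣ :=
  Subgroup.closure {u : (Matrix n n A)ˣ | ∃ i j : n, ∃ ξ ∈ S, i ≠ j ∧
    u.val = 1 + Matrix.single i j ξ}

/-- The relative elementary subgroup `E(n,A,I)`, the normal closure of `E(n,I)`
in `E(n,A)`. -/
def relElemSubgroup (I : TwoSidedIdeal A) : Subgroup (Matrix n n A)ˣ :=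
  Subgroup.closure {x : (Matrix n n A)ˣ |
    ∃ c ∈ elemSubgroup n A (Set.univ : Set A), ∃ u ∈ elemSubgroup n A {a : A | a ∈ I},
      x = c * u * c⁻¹}

/-- The principal congruence subgroup `GL(n,A,K)`: invertible matrices congruent to the
identity modulo `K`.  (This set is already a group, so it coincides with the subgroup it
generates.) -/
def congrSubgroup (K : TwoSidedIdeal A) : Subgroup (Matrix n n A)ˣ :=
  Subgroup.closure {u : (Matrix n n A)ˣ | ∀ i j : n, (u.val - 1) i j ∈ K}

/-- The block diagonal matrix `diag(y⁻¹, y)` as a unit of the `2n × 2n` matrix ring. -/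
def hyperbolicUnit {N : ℕ} {A : Type*} [Ring A] (y : (Matrix (Fin N) (Fin N) A)ˣ) :
    (Matrix (Fin N ⊕ Fin N) (Fin N ⊕ Fin N) A)ˣ where
  val := Matrix.fromBlocks (y⁻¹).val 0 0 y.val
  inv := Matrix.fromBlocks y.val 0 0 (y⁻¹).val
  val_inv := by
    rw [Matrix.fromBlocks_multiply]
    simp only [mul_zero, zero_mul, add_zero, zero_add, mul_one, one_mul,
      Units.mul_inv, Units.inv_mul]
    rw [Matrix.fromBlocks_one]
  inv_val := by
    rw [Matrix.fromBlocks_multiply]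
    simp only [mul_zero, zero_mul, add_zero, zero_add, mul_one, one_mul,
      Units.mul_inv, Units.inv_mul]
    rw [Matrix.fromBlocks_one]

section BlockTransvection

variable {R : Type*} [Ring R] {ι κ : Type*} [Fintype ι] [Fintype κ] [DecidableEq ι]
  [DecidableEq κ]

def upperTransvection (M : Matrix ι κ R) : (Matrix (ι ⊕ κ) (ι ⊕ κ) R)ˣ where
  val := fromBlocks 1 M 0 1
  inv := fromBlocks 1 (-M) 0 1
  val_inv := by simp [fromBlocks_multiply]
  inv_val := by simp [fromBlocks_multiply]

def lowerTransvection (M : Matrix κ ι R) : (Matrix (ι ⊕ κ) (ι ⊕ κ) R)ˣ where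
  val := fromBlocks 1 0 M 1
  inv := fromBlocks 1 0 (-M) 1
  val_inv := by simp [fromBlocks_multiply]
  inv_val := by simp [fromBlocks_multiply]

@[simp] lemma val_upperTransvection (M : Matrix ι κ R) :
    (upperTransvection M).val = fromBlocks 1 M 0 1 := rfl

@[simp] lemma val_lowerTransvection (M : Matrix κ ι R) :
    (lowerTransvection M).val = fromBlocks 1 0 M 1 := rfl

lemma upperTransvection_add (M M' : Matrix ι κ R) :
    upperTransvection (M + M') = upperTransvection M * upperTransvection M' := by
  ext : 1; simp [fromBlocks_multiply, add_comm]

lemma lowerTransvection_add (M M' : Matrix κ ι R) :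
    lowerTransvection (M + M') = lowerTransvection M * lowerTransvection M' := by
  ext : 1; simp [fromBlocks_multiply]

lemma upperTransvection_zero : (upperTransvection 0 : (Matrix (ι ⊕ κ) (ι ⊕ κ) R)ˣ) = 1 := by
  ext : 1; simp

lemma upperTransvection_inv (M : Matrix ι κ R) :
    (upperTransvection M)⁻¹ = upperTransvection (-M) :=
  inv_eq_of_mul_eq_one_right <| by
    rw [← upperTransvection_add, add_neg_cancel, upperTransvection_zero]

lemma mem_of_map_single_mem {G : Type*} [Group G] {H : Subgroup G} {f : Matrix ι κ R → G}
    (hf : ∀ M M', f (M + M') = f M * f M') {M : Matrix ι κ R}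
    (hM : ∀ i j, f (single i j (M i j)) ∈ H) : f M ∈ H := by
  let φ : Multiplicative (Matrix ι κ R) →* G := MonoidHom.mk' f hf
  have hM' : Multiplicative.ofAdd M = ∏ i, ∏ j, .ofAdd (single i j (M i j)) := by
    simp only [← ofAdd_sum, ← matrix_eq_sum_single]
  change Multiplicative.ofAdd M ∈ H.comap φ
  rw [hM']
  exact prod_mem fun i _ => prod_mem fun j _ => hM i j

lemma upperTransvection_mem_elemSubgroup {S : Set R} {M : Matrix ι κ R} (hM : ∀ i j, M i j ∈ S) :
    upperTransvection M ∈ elemSubgroup (ι ⊕ κ) R S :=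
  mem_of_map_single_mem upperTransvection_add fun i j =>
    Subgroup.subset_closure ⟨.inl i, .inr j, M i j, hM i j, Sum.inl_ne_inr, by
      ext (k | k) (l | l) <;> simp [single, one_apply]⟩

lemma lowerTransvection_mem_elemSubgroup {S : Set R} {M : Matrix κ ι R} (hM : ∀ i j, M i j ∈ S) :
    lowerTransvection M ∈ elemSubgroup (ι ⊕ κ) R S :=
  mem_of_map_single_mem lowerTransvection_add fun i j =>
    Subgroup.subset_closure ⟨.inr i, .inl j, M i j, hM i j, Sum.inr_ne_inl, by
      ext (k | k) (l | l) <;> simp [single, one_apply]⟩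

end BlockTransvection

lemma Units.inv_sub_one_mem {S : Type*} [Ring S] {J : TwoSidedIdeal S} {y : Sˣ}
    (hy : (y : S) - 1 ∈ J) : ((y⁻¹ : Sˣ) : S) - 1 ∈ J := by
  have h : ((y⁻¹ : Sˣ) : S) - 1 = -(↑y⁻¹ * ((y : S) - 1)) := by
    rw [mul_sub, Units.inv_mul, mul_one, neg_sub]
  exact h ▸ J.neg_mem (J.mul_mem_left _ _ hy)

section RelElem

variable {n A} {I : TwoSidedIdeal A}

lemma conj_mem_relElemSubgroup {c u : (Matrix n n A)ˣ} (hc : c ∈ elemSubgroup n A Set.univ)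
    (hu : u ∈ elemSubgroup n A {a | a ∈ I}) : c * u * c⁻¹ ∈ relElemSubgroup n A I :=
  Subgroup.subset_closure ⟨c, hc, u, hu, rfl⟩

lemma elemSubgroup_le_relElemSubgroup :
    elemSubgroup n A {a | a ∈ I} ≤ relElemSubgroup n A I := fun u hu => by
  simpa using conj_mem_relElemSubgroup (one_mem _) hu

end RelElem

lemma hyperbolicUnit_eq {N : ℕ} {A : Type*} [Ring A] (y : (Matrix (Fin N) (Fin N) A)ˣ) :
    hyperbolicUnit y = upperTransvection ((y⁻¹).val - 1) *
      (upperTransvection 1 * lowerTransvection (-(y.val - 1)) * (upperTransvection 1)⁻¹) *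
        lowerTransvection (-((y⁻¹).val - 1)) := by
  have hvu : (y⁻¹).val * y.val = 1 := y.inv_mul
  have huv : y.val * (y⁻¹).val = 1 := y.mul_inv
  ext : 1
  change fromBlocks (y⁻¹).val 0 0 y.val = _
  simp only [upperTransvection_inv, Units.val_mul, val_upperTransvection, val_lowerTransvection,
    fromBlocks_multiply, fromBlocks_inj, Matrix.mul_zero, Matrix.zero_mul, Matrix.mul_one,
    Matrix.one_mul, Matrix.mul_sub, Matrix.sub_mul, Matrix.mul_neg, Matrix.neg_mul,
    Matrix.mul_add, Matrix.add_mul, add_zero, zero_add, hvu, huv]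
  exact ⟨by abel, by abel, by abel, by abel⟩

/-- For `y ∈ GL(n,A,I)`, the `2n × 2n` matrix `diag(y⁻¹, y)` belongs to the relative
elementary subgroup `E(2n,A,I)`. -/
theorem hyperbolic_mem_relElem {N : ℕ} {A : Type*} [Ring A]
    (I : TwoSidedIdeal A) (y : (Matrix (Fin N) (Fin N) A)ˣ)
    (hy : ∀ i j, (y.val - 1) i j ∈ I) :
    hyperbolicUnit y ∈ relElemSubgroup (Fin N ⊕ Fin N) A I := by
  have hv : ∀ i j, ((y⁻¹).val - 1) i j ∈ I := Units.inv_sub_one_mem (J := I.matrix (Fin N)) hy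
  rw [hyperbolicUnit_eq]
  refine mul_mem (mul_mem ?_ ?_) ?_
  · exact elemSubgroup_le_relElemSubgroup (upperTransvection_mem_elemSubgroup hv)
  · exact conj_mem_relElemSubgroup (upperTransvection_mem_elemSubgroup fun _ _ => trivial)
      (lowerTransvection_mem_elemSubgroup fun i j => I.neg_mem (hy i j))
  · exact elemSubgroup_le_relElemSubgroup
      (lowerTransvection_mem_elemSubgroup fun i j => I.neg_mem (hv i j))
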